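/- arXiv:cond-mat/0212249 — 4 statements merged into one kernel-verified Lean document; each statement's English description precedes it below -/
import Mathlib

section
/- Let σ > 0 and κ ∈ ℝ. Let A₁ < 0 < A₂ be the two real roots of the quadratic 2σ²A² − 2κA − 1 = 0, set ω = 2σ²(A₁ − A₂), and define A(τ) = A₁A₂(1 − e^{ωτ})/(A₂ − A₁e^{ωτ}) for τ ≥ 0. Then the denominator A₂ − A₁e^{ωτ} is strictly positive for every τ ≥ 0, A(0) = 0, and A is differentiable on [0, ∞) with A′(τ) = 2σ²A(τ)² − 2κA(τ) − 1 for every τ ≥ 0 (equivalently, −A′(τ) − 2κA(τ) + 2σ²A(τ)² − 1 = 0). -/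
open Real

theorem quadratic_eq_mul_sub_mul_sub {R : Type*} [CommRing R] [IsDomain R] {a b c r₁ r₂ : R}
    (hr : r₁ ≠ r₂) (h₁ : a * r₁ ^ 2 + b * r₁ + c = 0)
    (h₂ : a * r₂ ^ 2 + b * r₂ + c = 0) (x : R) :
    a * x ^ 2 + b * x + c = a * (x - r₁) * (x - r₂) := by
  have hsum : a * (r₁ + r₂) + b = 0 :=
    mul_left_cancel₀ (sub_ne_zero.2 hr) (by linear_combination h₁ - h₂)
  linear_combination h₁ + (x - r₁) * hsum

/-- The solution of `A' = a (A - r₁) (A - r₂)`, `A 0 = 0`, found by separating variables. -/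
noncomputable def riccatiSolution (a r₁ r₂ t : ℝ) : ℝ :=
  r₁ * r₂ * (1 - exp (a * (r₁ - r₂) * t)) / (r₂ - r₁ * exp (a * (r₁ - r₂) * t))

@[simp]
theorem riccatiSolution_zero (a r₁ r₂ : ℝ) : riccatiSolution a r₁ r₂ 0 = 0 := by
  simp [riccatiSolution]

theorem hasDerivAt_riccatiSolution {a r₁ r₂ t : ℝ}
    (hden : r₂ - r₁ * exp (a * (r₁ - r₂) * t) ≠ 0) :
    HasDerivAt (riccatiSolution a r₁ r₂)
      (a * (riccatiSolution a r₁ r₂ t - r₁) * (riccatiSolution a r₁ r₂ t - r₂)) t := by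
  have hexp : HasDerivAt (fun s => exp (a * (r₁ - r₂) * s))
      (exp (a * (r₁ - r₂) * t) * (a * (r₁ - r₂))) t := by
    simpa using ((hasDerivAt_id t).const_mul (a * (r₁ - r₂))).exp
  have hnum : HasDerivAt (fun s => r₁ * r₂ * (1 - exp (a * (r₁ - r₂) * s)))
      (r₁ * r₂ * (0 - exp (a * (r₁ - r₂) * t) * (a * (r₁ - r₂)))) t :=
    ((hasDerivAt_const t 1).sub hexp).const_mul _
  have hdenom : HasDerivAt (fun s => r₂ - r₁ * exp (a * (r₁ - r₂) * s))
      (0 - r₁ * (exp (a * (r₁ - r₂) * t) * (a * (r₁ - r₂)))) t :=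
    (hasDerivAt_const t r₂).sub (hexp.const_mul r₁)
  refine (hnum.div hdenom hden).congr_deriv ?_
  unfold riccatiSolution
  field_simp
  ring

theorem stmt_0_general (σ κ : ℝ)
    (A₁ A₂ : ℝ) (hA₁ : A₁ < 0) (hA₂ : 0 < A₂)
    (hroot₁ : 2 * σ ^ 2 * A₁ ^ 2 - 2 * κ * A₁ - 1 = 0)
    (hroot₂ : 2 * σ ^ 2 * A₂ ^ 2 - 2 * κ * A₂ - 1 = 0)
    (ω : ℝ) (hω : ω = 2 * σ ^ 2 * (A₁ - A₂))
    (A : ℝ → ℝ)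
    (hA : ∀ τ, A τ = A₁ * A₂ * (1 - Real.exp (ω * τ)) / (A₂ - A₁ * Real.exp (ω * τ))) :
    (∀ τ, 0 ≤ τ → 0 < A₂ - A₁ * Real.exp (ω * τ)) ∧
    A 0 = 0 ∧
    (∀ τ, 0 ≤ τ →
      ∃ A' : ℝ, HasDerivAt A A' τ ∧
        A' = 2 * σ ^ 2 * (A τ) ^ 2 - 2 * κ * A τ - 1 ∧
        -A' - 2 * κ * A τ + 2 * σ ^ 2 * (A τ) ^ 2 - 1 = 0) := by
  subst hω
  obtain rfl : A = riccatiSolution (2 * σ ^ 2) A₁ A₂ := funext hA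
  have hden (τ : ℝ) : 0 < A₂ - A₁ * exp (2 * σ ^ 2 * (A₁ - A₂) * τ) := by
    linarith [mul_neg_of_neg_of_pos hA₁ (exp_pos (2 * σ ^ 2 * (A₁ - A₂) * τ))]
  have hfactor (x : ℝ) :
      2 * σ ^ 2 * x ^ 2 - 2 * κ * x - 1 = 2 * σ ^ 2 * (x - A₁) * (x - A₂) := by
    linear_combination quadratic_eq_mul_sub_mul_sub (a := 2 * σ ^ 2) (b := -2 * κ) (c := -1)
      (hA₁.trans hA₂).ne
      (by linear_combination hroot₁) (by linear_combination hroot₂) x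
  refine ⟨fun τ _ => hden τ, riccatiSolution_zero _ _ _, fun τ _ => ?_⟩
  refine ⟨_, hasDerivAt_riccatiSolution (hden τ).ne', (hfactor _).symm, ?_⟩
  linear_combination hfactor (riccatiSolution (2 * σ ^ 2) A₁ A₂ τ)

/-- properties of the solution `A(τ) = A₁A₂(1 − e^{ωτ})/(A₂ − A₁e^{ωτ})`
of the Riccati equation `−A′ − 2κA + 2σ²A² − 1 = 0` with `A(0) = 0`. -/
theorem stmt_0 (σ κ : ℝ) (hσ : 0 < σ)
    (A₁ A₂ : ℝ) (hA₁ : A₁ < 0) (hA₂ : 0 < A₂)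
    (hroot₁ : 2 * σ ^ 2 * A₁ ^ 2 - 2 * κ * A₁ - 1 = 0)
    (hroot₂ : 2 * σ ^ 2 * A₂ ^ 2 - 2 * κ * A₂ - 1 = 0)
    (ω : ℝ) (hω : ω = 2 * σ ^ 2 * (A₁ - A₂))
    (A : ℝ → ℝ)
    (hA : ∀ τ, A τ = A₁ * A₂ * (1 - Real.exp (ω * τ)) / (A₂ - A₁ * Real.exp (ω * τ))) :
    (∀ τ, 0 ≤ τ → 0 < A₂ - A₁ * Real.exp (ω * τ)) ∧
    A 0 = 0 ∧
    (∀ τ, 0 ≤ τ →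
      ∃ A' : ℝ, HasDerivAt A A' τ ∧
        A' = 2 * σ ^ 2 * (A τ) ^ 2 - 2 * κ * A τ - 1 ∧
        -A' - 2 * κ * A τ + 2 * σ ^ 2 * (A τ) ^ 2 - 1 = 0) :=
  stmt_0_general σ κ A₁ A₂ hA₁ hA₂ hroot₁ hroot₂ ω hω A hA
end

section
/- Let σ > 0, κ ∈ ℝ, and θ, R₁ ∈ ℝ constants. Let A₁ < 0 < A₂ be the two real roots of 2σ²A² − 2κA − 1 = 0, set ω = 2σ²(A₁ − A₂), define A(τ) = A₁A₂(1 − e^{ωτ})/(A₂ − A₁e^{ωτ}), and set ω₁ = 2σ²A₁ − κ. Then (i) ω₁ = ω/2, in particular ω₁ < 0 and ω₁ ≠ ω; and (ii) the function B(τ) := (2/(A₂ − A₁e^{ωτ})) · [ (A₂(A₁θ − R₁)/ω₁)(e^{ω₁τ} − 1) − (A₁(A₂θ − R₁)/(ω₁ − ω))(e^{ω₁τ} − e^{ωτ}) ] satisfies B(0) = 0 and −B′(τ) − κB(τ) + 2σ²A(τ)B(τ) + 2θA(τ) − 2R₁ = 0 for all τ ≥ 0. -/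
/-!
Vieta's formula `κ = σ²(A₁ + A₂)` gives `ω₁ = σ²(A₁ - A₂) = ω/2`.
Writing `D(τ) = A₂ - A₁e^{ωτ}`, it also gives `D' = (ω₁ - (2σ²A - κ)) D`, so the
substitution `B = 2Y/D` turns the equation for `B` into the constant-coefficient linear equation
`Y' = ω₁Y + A₂(A₁θ - R₁) - A₁(A₂θ - R₁)e^{ωτ}`, whose solution with `Y(0) = 0` is the bracket
in the formula for `B`.
-/

open Real

lemma mul_add_eq_neg_of_quadratic_roots {a b c x y : ℝ} (hx : a * x ^ 2 + b * x + c = 0)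
    (hy : a * y ^ 2 + b * y + c = 0) (hxy : x ≠ y) :
    a * (x + y) = -b := by
  have : (x - y) * (a * (x + y) + b) = 0 := by linear_combination hx - hy
  linarith [(mul_eq_zero.1 this).resolve_left (sub_ne_zero.2 hxy)]

/-- The solution of `Y' = αY + a - b e^{βt}` with `Y(0) = 0`. -/
noncomputable def forcedExpSolution (α β a b t : ℝ) : ℝ :=
  a / α * (exp (α * t) - 1) - b / (α - β) * (exp (α * t) - exp (β * t))

lemma forcedExpSolution_zero (α β a b : ℝ) : forcedExpSolution α β a b 0 = 0 := by
  simp [forcedExpSolution]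

lemma hasDerivAt_exp_mul (α t : ℝ) : HasDerivAt (fun s => exp (α * s)) (α * exp (α * t)) t := by
  simpa [mul_comm] using ((hasDerivAt_id t).const_mul α).exp

lemma hasDerivAt_forcedExpSolution (α β a b t : ℝ) (hα : α ≠ 0) (hαβ : α ≠ β) :
    HasDerivAt (forcedExpSolution α β a b)
      (α * forcedExpSolution α β a b t + a - b * exp (β * t)) t := by
  have h := (((hasDerivAt_exp_mul α t).sub_const 1).const_mul (a / α)).sub
    (((hasDerivAt_exp_mul α t).sub (hasDerivAt_exp_mul β t)).const_mul (b / (α - β)))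
  refine h.congr_deriv ?_
  unfold forcedExpSolution
  field_simp [sub_ne_zero.2 hαβ]
  ring

lemma hasDerivAt_div_of_linear {Y D : ℝ → ℝ} {t c p q Y' D' : ℝ} (hY : HasDerivAt Y Y' t)
    (hD : HasDerivAt D D' t) (hD0 : D t ≠ 0) (hY' : Y' = c * Y t + q * D t)
    (hD' : D' = (c - p) * D t) :
    HasDerivAt (fun s => Y s / D s) (p * (Y t / D t) + q) t := by
  refine (hY.div hD hD0).congr_deriv ?_
  rw [hY', hD']
  field_simp
  ring

/-- with constant `θ` and `R₁`, one has `ω₁ = ω/2 < 0`, `ω₁ ≠ ω`, and the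
explicit function `B(τ)` solves the linear coefficient equation with `B(0) = 0`. -/
theorem stmt_4 (σ κ θ R₁ : ℝ) (hσ : 0 < σ)
    (A₁ A₂ : ℝ) (hA₁ : A₁ < 0) (hA₂ : 0 < A₂)
    (hroot₁ : 2 * σ ^ 2 * A₁ ^ 2 - 2 * κ * A₁ - 1 = 0)
    (hroot₂ : 2 * σ ^ 2 * A₂ ^ 2 - 2 * κ * A₂ - 1 = 0)
    (ω : ℝ) (hω : ω = 2 * σ ^ 2 * (A₁ - A₂))
    (A : ℝ → ℝ)
    (hA : ∀ τ, A τ = A₁ * A₂ * (1 - Real.exp (ω * τ)) / (A₂ - A₁ * Real.exp (ω * τ)))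
    (ω₁ : ℝ) (hω₁ : ω₁ = 2 * σ ^ 2 * A₁ - κ)
    (B : ℝ → ℝ)
    (hB : ∀ τ, B τ = 2 / (A₂ - A₁ * Real.exp (ω * τ)) *
        (A₂ * (A₁ * θ - R₁) / ω₁ * (Real.exp (ω₁ * τ) - 1)
          - A₁ * (A₂ * θ - R₁) / (ω₁ - ω) * (Real.exp (ω₁ * τ) - Real.exp (ω * τ)))) :
    (ω₁ = ω / 2 ∧ ω₁ < 0 ∧ ω₁ ≠ ω) ∧
    B 0 = 0 ∧
    ∀ τ, 0 ≤ τ →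
      ∃ B' : ℝ, HasDerivAt B B' τ ∧
        -B' - κ * B τ + 2 * σ ^ 2 * A τ * B τ + 2 * θ * A τ - 2 * R₁ = 0 := by
  have hsum := mul_add_eq_neg_of_quadratic_roots (a := 2 * σ ^ 2) (b := -2 * κ) (c := -1)
    (x := A₁) (y := A₂) (by linear_combination hroot₁) (by linear_combination hroot₂) (by linarith)
  have hω₁' : ω₁ = σ ^ 2 * (A₁ - A₂) := by linear_combination hω₁ + hsum / 2
  have hω₁neg : ω₁ < 0 := by rw [hω₁']; exact mul_neg_of_pos_of_neg (by positivity) (by linarith)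
  have hωω₁ : ω = 2 * ω₁ := by rw [hω, hω₁']; ring
  let Y := forcedExpSolution ω₁ ω (A₂ * (A₁ * θ - R₁)) (A₁ * (A₂ * θ - R₁))
  let D := fun t => A₂ - A₁ * exp (ω * t)
  have hBY : B = fun t => 2 * Y t / D t := funext fun t => by rw [hB t, div_mul_eq_mul_div]; rfl
  refine ⟨⟨by linarith, hω₁neg, by linarith⟩, by simp [hBY, Y, forcedExpSolution_zero], ?_⟩
  intro τ _
  have hD0 : D τ ≠ 0 := by have := exp_pos (ω * τ); dsimp [D]; nlinarith
  have hY := (hasDerivAt_forcedExpSolution ω₁ ω (A₂ * (A₁ * θ - R₁)) (A₁ * (A₂ * θ - R₁)) τ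
    hω₁neg.ne (by linarith)).const_mul 2
  have hD : HasDerivAt D (-(A₁ * (ω * exp (ω * τ)))) τ :=
    ((hasDerivAt_exp_mul ω τ).const_mul A₁).const_sub A₂
  refine ⟨_, hBY ▸ hasDerivAt_div_of_linear (c := ω₁) (p := 2 * σ ^ 2 * A τ - κ)
    (q := 2 * θ * A τ - 2 * R₁) hY hD hD0 ?_ ?_, by rw [hBY]; ring⟩
  · rw [hA]; dsimp [D] at hD0 ⊢; field_simp; ring
  · rw [hA]; dsimp [D] at hD0 ⊢; field_simp
    linear_combination (-A₁ * exp (ω * τ)) * hωω₁ - (A₁ * exp (ω * τ) + A₂) * hω₁'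
      + (A₂ - A₁ * exp (ω * τ)) / 2 * hsum
end

section
/- Let σ > 0, κ > 0, and T > 0. Let A₁ < 0 < A₂ be the two real roots of 2σ²A² − 2κA − 1 = 0, set ω = 2σ²(A₁ − A₂), and define A(τ) = A₁A₂(1 − e^{ωτ})/(A₂ − A₁e^{ωτ}). Let B : [0, T] → ℝ be continuously differentiable with B(0) = 0, and let C : [0, T] → ℝ be continuous. For τ ∈ (0, T] and ξ ∈ ℝ define f̂(ξ, τ) = ∫_ℝ e^{−ixξ} exp(A(τ)x² + B(τ)x + C(τ)) dx (the integral converges since A(τ) < 0 for τ > 0). Then for every natural number N there exists a constant C_N such that for all τ ∈ (0, T] and all ξ ∈ ℝ with |ξ| ≥ 1: |ξ|^N |f̂(ξ, τ)| ≤ C_N e^{−ξ²/(8τ)}. -/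
open Real in
private lemma aux_poly_decay (δ : ℝ) (hδ : 0 < δ) (N : ℕ) (ξ : ℝ) (hξ : 1 ≤ |ξ|) :
    |ξ| ^ N * Real.exp (-(δ * ξ ^ 2)) ≤ (N.factorial : ℝ) / δ ^ N := by
  have h0 : (0:ℝ) ≤ δ * ξ ^ 2 := by positivity
  have h1 : (δ * ξ ^ 2) ^ N / (N.factorial : ℝ) ≤ Real.exp (δ * ξ ^ 2) :=
    Real.pow_div_factorial_le_exp _ h0 N
  have habs : |ξ| ≤ ξ ^ 2 := by nlinarith [sq_abs ξ, abs_nonneg ξ]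
  have h2 : |ξ| ^ N ≤ (ξ ^ 2) ^ N := pow_le_pow_left₀ (abs_nonneg ξ) habs N
  have hfac : (0:ℝ) < (N.factorial : ℝ) := by exact_mod_cast N.factorial_pos
  have h3 : δ ^ N * (ξ ^ 2) ^ N ≤ (N.factorial : ℝ) * Real.exp (δ * ξ ^ 2) := by
    rw [← mul_pow]
    rw [div_le_iff₀ hfac] at h1
    linarith [h1]
  have hepos : (0:ℝ) < Real.exp (δ * ξ ^ 2) := Real.exp_pos _
  have key : (ξ ^ 2) ^ N * Real.exp (-(δ * ξ ^ 2)) ≤ (N.factorial : ℝ) / δ ^ N := by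
    rw [le_div_iff₀ (pow_pos hδ N), Real.exp_neg]
    calc (ξ ^ 2) ^ N * (Real.exp (δ * ξ ^ 2))⁻¹ * δ ^ N
        = (δ ^ N * (ξ ^ 2) ^ N) * (Real.exp (δ * ξ ^ 2))⁻¹ := by ring
      _ ≤ ((N.factorial : ℝ) * Real.exp (δ * ξ ^ 2)) * (Real.exp (δ * ξ ^ 2))⁻¹ :=
          mul_le_mul_of_nonneg_right h3 (by positivity)
      _ = (N.factorial : ℝ) := by field_simp
  calc |ξ| ^ N * Real.exp (-(δ * ξ ^ 2)) ≤ (ξ ^ 2) ^ N * Real.exp (-(δ * ξ ^ 2)) :=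
        mul_le_mul_of_nonneg_right h2 (Real.exp_nonneg _)
    _ ≤ (N.factorial : ℝ) / δ ^ N := key

open Real in
private lemma aux_fourier_gauss (a b c ξ : ℝ) (ha : a < 0) :
    ‖(∫ x : ℝ, Complex.exp (-(Complex.I * x * ξ)) *
        (Real.exp (a * x ^ 2 + b * x + c) : ℂ))‖
    = Real.sqrt (π / (-a)) * Real.exp (c - b ^ 2 / (4 * a) + ξ ^ 2 / (4 * a)) := by
  have ha0 : (a:ℂ) ≠ 0 := by exact_mod_cast ne_of_lt ha
  have ha0' : a ≠ 0 := ne_of_lt ha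
  have h : ∀ x : ℝ, Complex.exp (-(Complex.I * x * ξ)) * (Real.exp (a * x ^ 2 + b * x + c) : ℂ)
      = Complex.exp ((a:ℂ) * x ^ 2 + ((b:ℂ) - Complex.I * ξ) * x + (c:ℂ)) := by
    intro x
    rw [Complex.ofReal_exp, ← Complex.exp_add]
    push_cast
    ring_nf
  have hval : (∫ x : ℝ, Complex.exp (-(Complex.I * x * ξ)) *
      (Real.exp (a * x ^ 2 + b * x + c) : ℂ))
      = (↑π / -(a:ℂ)) ^ (1/2 : ℂ) *
        Complex.exp (↑c - ((b:ℂ) - Complex.I * ξ) ^ 2 / (4 * (a:ℂ))) := by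
    simp_rw [h]
    exact integral_cexp_quadratic (by simpa using ha) _ _
  rw [hval]
  have hz : (↑c - ((b:ℂ) - Complex.I * ξ) ^ 2 / (4 * (a:ℂ))) =
      ((c - b ^ 2 / (4 * a) + ξ ^ 2 / (4 * a) : ℝ) : ℂ) +
        ((b * ξ / (2 * a) : ℝ) : ℂ) * Complex.I := by
    push_cast
    field_simp
    ring_nf
    simp only [Complex.I_sq]
    ring
  rw [norm_mul, hz]
  have h1 : (↑π / -(a:ℂ)) = ((π / -a : ℝ) : ℂ) := by push_cast; ring
  rw [h1, Complex.norm_cpow_eq_rpow_re_of_pos (div_pos Real.pi_pos (by linarith)),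
    Complex.norm_exp]
  have h2 : (((c - b ^ 2 / (4 * a) + ξ ^ 2 / (4 * a) : ℝ) : ℂ) +
      ((b * ξ / (2 * a) : ℝ) : ℂ) * Complex.I).re
      = c - b ^ 2 / (4 * a) + ξ ^ 2 / (4 * a) := by
    simp only [Complex.add_re, Complex.ofReal_re, Complex.mul_re, Complex.ofReal_im,
      Complex.I_re, Complex.I_im]
    ring
  rw [h2, Real.sqrt_eq_rpow]
  norm_num

open Real in
set_option maxHeartbeats 1000000 in
/-- rapid decay of the Fourier transform (in `x`) of the Gaussian-model
bond price `f(x,τ) = exp(A(τ)x² + B(τ)x + C(τ))`: for every `N` there is `C_N` with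
`|ξ|^N |f̂(ξ,τ)| ≤ C_N e^{−ξ²/(8τ)}` for all `τ ∈ (0,T]` and `|ξ| ≥ 1`. -/
theorem stmt_6 (σ κ T : ℝ) (hσ : 0 < σ) (hκ : 0 < κ) (hT : 0 < T)
    (A₁ A₂ : ℝ) (hA₁ : A₁ < 0) (hA₂ : 0 < A₂)
    (hroot₁ : 2 * σ ^ 2 * A₁ ^ 2 - 2 * κ * A₁ - 1 = 0)
    (hroot₂ : 2 * σ ^ 2 * A₂ ^ 2 - 2 * κ * A₂ - 1 = 0)
    (ω : ℝ) (hω : ω = 2 * σ ^ 2 * (A₁ - A₂))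
    (A : ℝ → ℝ)
    (hA : ∀ τ, A τ = A₁ * A₂ * (1 - Real.exp (ω * τ)) / (A₂ - A₁ * Real.exp (ω * τ)))
    (B C : ℝ → ℝ)
    (hB : ContDiffOn ℝ 1 B (Set.Icc 0 T)) (hB0 : B 0 = 0)
    (hC : ContinuousOn C (Set.Icc 0 T))
    (fhat : ℝ → ℝ → ℂ)
    (hfhat : ∀ ξ τ, fhat ξ τ =
      ∫ x : ℝ, Complex.exp (-(Complex.I * x * ξ)) *
        (Real.exp (A τ * x ^ 2 + B τ * x + C τ) : ℂ)) :
    ∀ N : ℕ, ∃ CN : ℝ, ∀ τ ∈ Set.Ioc (0:ℝ) T, ∀ ξ : ℝ, 1 ≤ |ξ| →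
      |ξ| ^ N * ‖fhat ξ τ‖ ≤ CN * Real.exp (-ξ ^ 2 / (8 * τ)) := by
  have hσ2 : (0:ℝ) < σ ^ 2 := by positivity
  have hne : A₁ - A₂ ≠ 0 := ne_of_lt (by linarith)
  have hsum : 2 * σ ^ 2 * (A₁ + A₂) = 2 * κ := by
    have h : (A₁ - A₂) * (2 * σ ^ 2 * (A₁ + A₂) - 2 * κ) = 0 := by
      linear_combination hroot₁ - hroot₂
    rcases mul_eq_zero.mp h with h' | h'
    · exact absurd h' hne
    · linarith
  have hprod : 2 * σ ^ 2 * (A₁ * A₂) = -1 := by linear_combination A₁ * hsum - hroot₁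
  have hsumpos : 0 < A₁ + A₂ := by nlinarith
  have hωneg : ω < 0 := by rw [hω]; nlinarith
  obtain ⟨c, hc⟩ : ∃ c : ℝ, c = (A₂ - A₁) / A₂ := ⟨_, rfl⟩
  have hcpos : 0 < c := hc ▸ div_pos (by linarith) hA₂
  have hc2 : c < 2 := by rw [hc, div_lt_iff₀ hA₂]; nlinarith
  obtain ⟨m, hm⟩ : ∃ m : ℝ, m = Real.exp (ω * T) := ⟨_, rfl⟩
  have hmpos : 0 < m := hm ▸ Real.exp_pos _
  obtain ⟨ε, hε⟩ : ∃ ε : ℝ, ε = (2 - c) / (8 * c) := ⟨_, rfl⟩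
  have hεpos : 0 < ε := hε ▸ div_pos (by linarith) (by linarith)
  obtain ⟨δ, hδdef⟩ : ∃ δ : ℝ, δ = ε / (2 * T) := ⟨_, rfl⟩
  have hδpos : 0 < δ := hδdef ▸ div_pos hεpos (by linarith)
  -- Lipschitz bound on B
  have hBd : DifferentiableOn ℝ B (Set.Icc 0 T) := hB.differentiableOn one_ne_zero
  have hB'c : ContinuousOn (derivWithin B (Set.Icc 0 T)) (Set.Icc 0 T) :=
    hB.continuousOn_derivWithin (uniqueDiffOn_Icc hT) le_rfl
  obtain ⟨L, hL⟩ := isCompact_Icc.exists_bound_of_continuousOn hB'c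
  have hBlip : ∀ τ ∈ Set.Icc (0:ℝ) T, |B τ| ≤ L * τ := by
    intro τ hτ
    have h := (convex_Icc (0:ℝ) T).norm_image_sub_le_of_norm_derivWithin_le hBd hL
      (Set.left_mem_Icc.mpr hT.le) hτ
    simpa [hB0, Real.norm_eq_abs, abs_of_nonneg hτ.1] using h
  -- bound on C
  obtain ⟨Cb, hCb⟩ := isCompact_Icc.exists_bound_of_continuousOn hC
  -- bounds on A
  have hAbound : ∀ τ ∈ Set.Ioc (0:ℝ) T, m * τ ≤ -(A τ) ∧ -(A τ) ≤ c * τ := by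
    intro τ hτ
    obtain ⟨hτ0, hτT⟩ := hτ
    obtain ⟨E, hE⟩ : ∃ E : ℝ, E = Real.exp (ω * τ) := ⟨_, rfl⟩
    have hE0 : 0 < E := hE ▸ Real.exp_pos _
    have hE1 : E < 1 := hE ▸ Real.exp_lt_one_iff.mpr (by nlinarith)
    have hmE : m ≤ E := by
      rw [hm, hE]; exact Real.exp_le_exp.mpr (by nlinarith)
    have h1E : 1 - E ≤ -(ω * τ) := by
      have := Real.add_one_le_exp (ω * τ); rw [← hE] at this; linarith
    have h1E' : -(ω * τ) * E ≤ 1 - E := by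
      have h' := Real.add_one_le_exp (-(ω * τ))
      have hinv : Real.exp (-(ω * τ)) * E = 1 := by
        rw [hE, ← Real.exp_add]; simp
      nlinarith
    have hD1 : A₂ ≤ A₂ - A₁ * E := by nlinarith
    have hD2 : A₂ - A₁ * E ≤ A₂ - A₁ := by nlinarith
    have hDpos : 0 < A₂ - A₁ * E := lt_of_lt_of_le hA₂ hD1
    have hden : (0:ℝ) < 2 * σ ^ 2 * (A₂ - A₁ * E) := by positivity
    have hprodval : A₁ * A₂ = -1 / (2 * σ ^ 2) := by
      field_simp
      linarith [hprod]
    have hAτ : -(A τ) = (1 - E) / (2 * σ ^ 2 * (A₂ - A₁ * E)) := by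
      rw [hA τ, ← hE, hprodval]
      field_simp
    constructor
    · rw [hAτ, le_div_iff₀ hden]
      have f1 : m * (A₂ - A₁ * E) ≤ E * (A₂ - A₁) :=
        mul_le_mul hmE hD2 hDpos.le hE0.le
      have f2 : 2 * σ ^ 2 * τ * (m * (A₂ - A₁ * E)) ≤ 2 * σ ^ 2 * τ * (E * (A₂ - A₁)) :=
        mul_le_mul_of_nonneg_left f1 (by positivity)
      have f3 : 2 * σ ^ 2 * τ * (E * (A₂ - A₁)) = -(ω * τ) * E := by rw [hω]; ring
      nlinarith [h1E']
    · rw [hAτ, div_le_iff₀ hden]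
      have hcA₂ : c * A₂ = A₂ - A₁ := by
        rw [hc, div_mul_cancel₀ _ hA₂.ne']
      have hctau : (0:ℝ) ≤ c * τ * (2 * σ ^ 2) :=
        mul_nonneg (mul_nonneg hcpos.le hτ0.le) (by positivity)
      have f1 : c * τ * (2 * σ ^ 2) * A₂ ≤ c * τ * (2 * σ ^ 2) * (A₂ - A₁ * E) :=
        mul_le_mul_of_nonneg_left hD1 hctau
      have f2 : c * τ * (2 * σ ^ 2) * A₂ = -(ω * τ) := by
        rw [hω]; linear_combination 2 * σ ^ 2 * τ * hcA₂
      nlinarith [h1E]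
  -- main estimate
  intro N
  refine ⟨Real.sqrt (π / (m * ε)) * ((N.factorial : ℝ) / δ ^ N) *
    Real.exp (Cb + L ^ 2 * T / (4 * m)), ?_⟩
  intro τ hτ ξ hξ
  obtain ⟨hτ0, hτT⟩ := hτ
  obtain ⟨ha1, ha2⟩ := hAbound τ ⟨hτ0, hτT⟩
  have hτ0' : τ ≠ 0 := ne_of_gt hτ0
  have hapos : 0 < -(A τ) := lt_of_lt_of_le (mul_pos hmpos hτ0) ha1
  have hAτneg : A τ < 0 := by linarith
  have hAne : A τ ≠ 0 := ne_of_lt hAτneg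
  have hξsq : 1 ≤ ξ ^ 2 := by nlinarith [sq_abs ξ]
  -- the value of the Fourier transform
  have habs : ‖fhat ξ τ‖ = Real.sqrt (π / (-(A τ))) *
      Real.exp (C τ - (B τ) ^ 2 / (4 * A τ) + ξ ^ 2 / (4 * A τ)) := by
    rw [hfhat]
    exact aux_fourier_gauss (A τ) (B τ) (C τ) ξ hAτneg
  -- rewrite exponent with -(A τ)
  have hexpo : C τ - (B τ) ^ 2 / (4 * A τ) + ξ ^ 2 / (4 * A τ)
      = C τ + (B τ) ^ 2 / (4 * (-(A τ))) - ξ ^ 2 / (4 * (-(A τ))) := by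
    field_simp
    ring
  -- bound the exponent
  have hC1 : C τ ≤ Cb := le_trans (le_abs_self _) (hCb τ ⟨hτ0.le, hτT⟩)
  have hB1 : (B τ) ^ 2 / (4 * (-(A τ))) ≤ L ^ 2 * T / (4 * m) := by
    have hBτ : |B τ| ≤ L * τ := hBlip τ ⟨hτ0.le, hτT⟩
    have hB2 : (B τ) ^ 2 ≤ L ^ 2 * τ ^ 2 := by nlinarith [abs_nonneg (B τ), sq_abs (B τ)]
    have step1 : (B τ) ^ 2 / (4 * (-(A τ))) ≤ (L ^ 2 * τ ^ 2) / (4 * (m * τ)) := by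
      apply div_le_div₀ (by positivity) hB2 (by nlinarith [mul_pos hmpos hτ0])
      linarith
    have step2 : (L ^ 2 * τ ^ 2) / (4 * (m * τ)) = L ^ 2 * τ / (4 * m) := by
      field_simp
    have step3 : L ^ 2 * τ / (4 * m) ≤ L ^ 2 * T / (4 * m) := by
      rw [div_le_div_iff₀ (by linarith) (by linarith)]
      exact mul_le_mul_of_nonneg_right
        (mul_le_mul_of_nonneg_left hτT (sq_nonneg L)) (by linarith)
    linarith
  have hξ1 : ξ ^ 2 / (8 * τ) + ε / (2 * τ) + δ * ξ ^ 2 ≤ ξ ^ 2 / (4 * (-(A τ))) := by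
    have step1 : ξ ^ 2 / (4 * (c * τ)) ≤ ξ ^ 2 / (4 * (-(A τ))) := by
      apply div_le_div_of_nonneg_left (by positivity) (by linarith)
      linarith
    have hc0 : c ≠ 0 := ne_of_gt hcpos
    have step2 : ξ ^ 2 / (4 * (c * τ)) = ξ ^ 2 / (8 * τ) + ε * ξ ^ 2 / τ := by
      rw [hε]
      field_simp
      ring
    have s3 : ε / (2 * τ) ≤ ε * ξ ^ 2 / (2 * τ) := by
      rw [div_le_div_iff₀ (by linarith) (by linarith)]
      exact mul_le_mul_of_nonneg_right
        ((le_mul_iff_one_le_right hεpos).mpr hξsq) (by linarith)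
    have s4 : δ * ξ ^ 2 ≤ ε * ξ ^ 2 / (2 * τ) := by
      have e1 : δ * ξ ^ 2 = ε * ξ ^ 2 / (2 * T) := by rw [hδdef]; ring
      rw [e1]
      apply div_le_div_of_nonneg_left (mul_nonneg hεpos.le (sq_nonneg ξ)) (by linarith)
      linarith
    have s5 : ε * ξ ^ 2 / τ = ε * ξ ^ 2 / (2 * τ) + ε * ξ ^ 2 / (2 * τ) := by
      field_simp
      ring
    linarith
  have hXle : C τ - (B τ) ^ 2 / (4 * A τ) + ξ ^ 2 / (4 * A τ)
      ≤ (Cb + L ^ 2 * T / (4 * m)) + -(ε / (2 * τ)) + -(δ * ξ ^ 2) + -(ξ ^ 2 / (8 * τ)) := by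
    rw [hexpo]
    linarith
  -- assemble
  have hsqrt1 : Real.sqrt (π / (-(A τ))) ≤ Real.sqrt (π / (m * τ)) := by
    apply Real.sqrt_le_sqrt
    exact div_le_div_of_nonneg_left Real.pi_pos.le (mul_pos hmpos hτ0) ha1
  have hsqrt2 : Real.exp (-(ε / (2 * τ))) ≤ Real.sqrt (τ / ε) := by
    have h1 : Real.exp (-(ε / τ)) ≤ τ / ε := by
      rw [Real.exp_neg]
      rw [inv_le_comm₀ (Real.exp_pos _) (div_pos hτ0 hεpos)]
      rw [inv_div]
      have := Real.add_one_le_exp (ε / τ)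
      linarith
    calc Real.exp (-(ε / (2 * τ))) = Real.exp (-(ε / τ) / 2) := by
          congr 1
          ring
      _ = Real.sqrt (Real.exp (-(ε / τ))) := Real.exp_half _
      _ ≤ Real.sqrt (τ / ε) := Real.sqrt_le_sqrt h1
  have hsqrt3 : Real.sqrt (π / (m * τ)) * Real.sqrt (τ / ε) = Real.sqrt (π / (m * ε)) := by
    rw [← Real.sqrt_mul (div_pos Real.pi_pos (mul_pos hmpos hτ0)).le]
    congr 1
    field_simp
  have hsqrtprod : Real.sqrt (π / (-(A τ))) * Real.exp (-(ε / (2 * τ)))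
      ≤ Real.sqrt (π / (m * ε)) := by
    calc Real.sqrt (π / (-(A τ))) * Real.exp (-(ε / (2 * τ)))
        ≤ Real.sqrt (π / (m * τ)) * Real.sqrt (τ / ε) :=
          mul_le_mul hsqrt1 hsqrt2 (Real.exp_nonneg _) (Real.sqrt_nonneg _)
      _ = Real.sqrt (π / (m * ε)) := hsqrt3
  have hpoly : |ξ| ^ N * Real.exp (-(δ * ξ ^ 2)) ≤ (N.factorial : ℝ) / δ ^ N :=
    aux_poly_decay δ hδpos N ξ hξ
  -- final computation
  rw [habs]
  calc |ξ| ^ N * (Real.sqrt (π / (-(A τ))) *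
      Real.exp (C τ - (B τ) ^ 2 / (4 * A τ) + ξ ^ 2 / (4 * A τ)))
      ≤ |ξ| ^ N * (Real.sqrt (π / (-(A τ))) *
        Real.exp ((Cb + L ^ 2 * T / (4 * m)) +
          -(ε / (2 * τ)) + -(δ * ξ ^ 2) + -(ξ ^ 2 / (8 * τ)))) := by
        apply mul_le_mul_of_nonneg_left _ (by positivity)
        apply mul_le_mul_of_nonneg_left _ (Real.sqrt_nonneg _)
        exact Real.exp_le_exp.mpr hXle
    _ = (Real.sqrt (π / (-(A τ))) * Real.exp (-(ε / (2 * τ)))) *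
        (|ξ| ^ N * Real.exp (-(δ * ξ ^ 2))) *
        Real.exp (Cb + L ^ 2 * T / (4 * m)) * Real.exp (-(ξ ^ 2 / (8 * τ))) := by
        rw [Real.exp_add, Real.exp_add, Real.exp_add]
        ring
    _ ≤ (Real.sqrt (π / (m * ε)) * ((N.factorial : ℝ) / δ ^ N)) *
        Real.exp (Cb + L ^ 2 * T / (4 * m)) * Real.exp (-(ξ ^ 2 / (8 * τ))) := by
        apply mul_le_mul_of_nonneg_right _ (Real.exp_nonneg _)
        apply mul_le_mul_of_nonneg_right _ (Real.exp_nonneg _)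
        exact mul_le_mul hsqrtprod hpoly (by positivity) (Real.sqrt_nonneg _)
    _ = Real.sqrt (π / (m * ε)) * ((N.factorial : ℝ) / δ ^ N) *
        Real.exp (Cb + L ^ 2 * T / (4 * m)) * Real.exp (-ξ ^ 2 / (8 * τ)) := by
        rw [neg_div]
end

section
/- Let σ > 0, κ, R₀, R₁ ∈ ℝ, and let θ : [0, ∞) → ℝ be continuous. Let A, B, C : [0, ∞) → ℝ be differentiable with A(0) = B(0) = C(0) = 0 satisfying the Riccati system: −A′ − 2κA + 2σ²A² − 1 = 0; −B′ − κB + 2σ²AB + 2θA − 2R₁ = 0; −C′ + σ²A + (σ²/2)B² + θB − R₀ = 0. Set θ₁ = θ + σ²B and κ₁ = κ − 2σ²A, and let a₁₃, a₁₂, a₁₁, a₁₀ : [0, ∞) → ℝ be differentiable, vanishing at τ = 0, and satisfying: a₁₃′ + 3κ₁a₁₃ = 8A³; a₁₂′ + 2κ₁a₁₂ − 3θ₁a₁₃ = 12A²B; a₁₁′ + κ₁a₁₁ − 2θ₁a₁₂ − 3σ²a₁₃ = 12A² + 6AB²; a₁₀′ − θ₁a₁₁ − σ²a₁₂ = 6AB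 + B³. Define Φ₀(x, τ) = A(τ)x² + B(τ)x + C(τ), f₀ = e^{Φ₀}, and f₁(x, τ) = e^{Φ₀(x, τ)}(a₁₃(τ)x³ + a₁₂(τ)x² + a₁₁(τ)x + a₁₀(τ)). Then f₁(x, 0) = 0 for all x, and for all (x, τ): −∂_τ f₁ + (θ(τ) − κx)∂_x f₁ + (σ²/2)∂_x² f₁ − (R₀ + 2R₁x + x²)f₁ = −∂_x³ f₀. -/
private lemma quadArg_hd (a b c x : ℝ) :
    HasDerivAt (fun y : ℝ => a * y ^ 2 + b * y + c) (2 * a * x + b) x := by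
  have h := (((hasDerivAt_pow 2 x).const_mul a).add ((hasDerivAt_id' x).const_mul b)).add_const c
  refine h.congr_deriv ?_
  push_cast
  ring

private lemma lin_hd (a b x : ℝ) :
    HasDerivAt (fun y : ℝ => 2 * a * y + b) (2 * a) x := by
  have h := ((hasDerivAt_id' x).const_mul (2 * a)).add_const b
  refine h.congr_deriv ?_
  ring

private lemma poly3_hd (p3 p2 p1 p0 x : ℝ) :
    HasDerivAt (fun y : ℝ => p3 * y ^ 3 + p2 * y ^ 2 + p1 * y + p0)
      (3 * p3 * x ^ 2 + 2 * p2 * x + p1) x := by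
  have h := ((((hasDerivAt_pow 3 x).const_mul p3).add ((hasDerivAt_pow 2 x).const_mul p2)).add
    ((hasDerivAt_id' x).const_mul p1)).add_const p0
  refine h.congr_deriv ?_
  push_cast
  ring

private lemma polyQ_hd (a b p3 p2 p1 p0 x : ℝ) :
    HasDerivAt (fun y : ℝ => (2 * a * y + b) * (p3 * y ^ 3 + p2 * y ^ 2 + p1 * y + p0)
        + (3 * p3 * y ^ 2 + 2 * p2 * y + p1))
      (2 * a * (p3 * x ^ 3 + p2 * x ^ 2 + p1 * x + p0)
        + (2 * a * x + b) * (3 * p3 * x ^ 2 + 2 * p2 * x + p1) + (6 * p3 * x + 2 * p2)) x := by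
  have hq : HasDerivAt (fun y : ℝ => 3 * p3 * y ^ 2 + 2 * p2 * y + p1)
      (2 * (3 * p3) * x + 2 * p2) x := quadArg_hd (3 * p3) (2 * p2) p1 x
  have h := ((lin_hd a b x).mul (poly3_hd p3 p2 p1 p0 x)).add hq
  refine h.congr_deriv ?_
  ring

private lemma polyR_hd (a b x : ℝ) :
    HasDerivAt (fun y : ℝ => (2 * a * y + b) * (2 * a * y + b) + 2 * a)
      (2 * a * (2 * a * x + b) + (2 * a * x + b) * (2 * a)) x :=
  ((lin_hd a b x).mul (lin_hd a b x)).add_const (2 * a)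

private lemma hd_exp_mul (a b c : ℝ) {h h' : ℝ → ℝ} (hh : ∀ y, HasDerivAt h (h' y) y) (x : ℝ) :
    HasDerivAt (fun y => Real.exp (a * y ^ 2 + b * y + c) * h y)
      (Real.exp (a * x ^ 2 + b * x + c) * ((2 * a * x + b) * h x + h' x)) x := by
  have h1 := ((quadArg_hd a b c x).exp).mul (hh x)
  refine h1.congr_deriv ?_
  ring

/-- the first (skewness) correction term
`f₁ = e^{Φ₀}(a₁₃(τ)x³ + a₁₂(τ)x² + a₁₁(τ)x + a₁₀(τ))` solves the Gaussian backward
equation `(−∂_τ + (θ(τ) − κx)∂_x + (σ²/2)∂_x² − r(x))f₁ = −∂_x³ f₀` with zero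
initial data, where `f₀ = e^{Φ₀}` is the Gaussian bond price. -/
theorem stmt_19 (σ κ R₀ R₁ : ℝ) (hσ : 0 < σ)
    (θ : ℝ → ℝ) (hθ : Continuous θ)
    (A B C : ℝ → ℝ)
    (hA : Differentiable ℝ A) (hB : Differentiable ℝ B) (hC : Differentiable ℝ C)
    (hA0 : A 0 = 0) (hB0 : B 0 = 0) (hC0 : C 0 = 0)
    (hRicA : ∀ τ, -deriv A τ - 2 * κ * A τ + 2 * σ ^ 2 * (A τ) ^ 2 - 1 = 0)
    (hRicB : ∀ τ,
      -deriv B τ - κ * B τ + 2 * σ ^ 2 * A τ * B τ + 2 * θ τ * A τ - 2 * R₁ = 0)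
    (hRicC : ∀ τ,
      -deriv C τ + σ ^ 2 * A τ + σ ^ 2 / 2 * (B τ) ^ 2 + θ τ * B τ - R₀ = 0)
    (θ₁ κ₁ : ℝ → ℝ)
    (hθ₁ : ∀ τ, θ₁ τ = θ τ + σ ^ 2 * B τ)
    (hκ₁ : ∀ τ, κ₁ τ = κ - 2 * σ ^ 2 * A τ)
    (a₁₃ a₁₂ a₁₁ a₁₀ : ℝ → ℝ)
    (hd₁₃ : Differentiable ℝ a₁₃) (hd₁₂ : Differentiable ℝ a₁₂)
    (hd₁₁ : Differentiable ℝ a₁₁) (hd₁₀ : Differentiable ℝ a₁₀)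
    (ha₁₃0 : a₁₃ 0 = 0) (ha₁₂0 : a₁₂ 0 = 0) (ha₁₁0 : a₁₁ 0 = 0) (ha₁₀0 : a₁₀ 0 = 0)
    (he₁₃ : ∀ τ, deriv a₁₃ τ + 3 * κ₁ τ * a₁₃ τ = 8 * (A τ) ^ 3)
    (he₁₂ : ∀ τ, deriv a₁₂ τ + 2 * κ₁ τ * a₁₂ τ - 3 * θ₁ τ * a₁₃ τ = 12 * (A τ) ^ 2 * B τ)
    (he₁₁ : ∀ τ, deriv a₁₁ τ + κ₁ τ * a₁₁ τ - 2 * θ₁ τ * a₁₂ τ - 3 * σ ^ 2 * a₁₃ τ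
      = 12 * (A τ) ^ 2 + 6 * A τ * (B τ) ^ 2)
    (he₁₀ : ∀ τ, deriv a₁₀ τ - θ₁ τ * a₁₁ τ - σ ^ 2 * a₁₂ τ = 6 * A τ * B τ + (B τ) ^ 3)
    (Φ₀ : ℝ → ℝ → ℝ)
    (hΦ₀ : ∀ x τ, Φ₀ x τ = A τ * x ^ 2 + B τ * x + C τ)
    (f₀ f₁ : ℝ → ℝ → ℝ)
    (hf₀ : ∀ x τ, f₀ x τ = Real.exp (Φ₀ x τ))
    (hf₁ : ∀ x τ, f₁ x τ = Real.exp (Φ₀ x τ) *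
      (a₁₃ τ * x ^ 3 + a₁₂ τ * x ^ 2 + a₁₁ τ * x + a₁₀ τ)) :
    (∀ x, f₁ x 0 = 0) ∧
    ∀ x τ : ℝ,
      -deriv (fun t => f₁ x t) τ + (θ τ - κ * x) * deriv (fun x' => f₁ x' τ) x
        + σ ^ 2 / 2 * deriv (deriv fun x' => f₁ x' τ) x
        - (R₀ + 2 * R₁ * x + x ^ 2) * f₁ x τ
      = -(deriv (deriv (deriv fun x' => f₀ x' τ)) x) := by
  constructor
  · intro x
    rw [hf₁, ha₁₃0, ha₁₂0, ha₁₁0, ha₁₀0]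
    ring
  intro x τ
  -- extract derivative values from the ODE system
  have dA : deriv A τ = 2 * σ ^ 2 * (A τ) ^ 2 - 2 * κ * A τ - 1 := by
    linear_combination -hRicA τ
  have dB : deriv B τ = 2 * σ ^ 2 * A τ * B τ + 2 * θ τ * A τ - 2 * R₁ - κ * B τ := by
    linear_combination -hRicB τ
  have dC : deriv C τ = σ ^ 2 * A τ + σ ^ 2 / 2 * (B τ) ^ 2 + θ τ * B τ - R₀ := by
    linear_combination -hRicC τ
  have d3 : deriv a₁₃ τ = 8 * (A τ) ^ 3 - 3 * (κ - 2 * σ ^ 2 * A τ) * a₁₃ τ := by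
    have h := he₁₃ τ; rw [hκ₁] at h; linear_combination h
  have d2 : deriv a₁₂ τ = 12 * (A τ) ^ 2 * B τ - 2 * (κ - 2 * σ ^ 2 * A τ) * a₁₂ τ
      + 3 * (θ τ + σ ^ 2 * B τ) * a₁₃ τ := by
    have h := he₁₂ τ; rw [hκ₁, hθ₁] at h; linear_combination h
  have d1 : deriv a₁₁ τ = 12 * (A τ) ^ 2 + 6 * A τ * (B τ) ^ 2
      - (κ - 2 * σ ^ 2 * A τ) * a₁₁ τ + 2 * (θ τ + σ ^ 2 * B τ) * a₁₂ τ
      + 3 * σ ^ 2 * a₁₃ τ := by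
    have h := he₁₁ τ; rw [hκ₁, hθ₁] at h; linear_combination h
  have d0 : deriv a₁₀ τ = 6 * A τ * B τ + (B τ) ^ 3 + (θ τ + σ ^ 2 * B τ) * a₁₁ τ
      + σ ^ 2 * a₁₂ τ := by
    have h := he₁₀ τ; rw [hθ₁] at h; linear_combination h
  -- rewrite the functions in explicit form
  have hfx : (fun x' => f₁ x' τ) = fun y => Real.exp (A τ * y ^ 2 + B τ * y + C τ) *
      (a₁₃ τ * y ^ 3 + a₁₂ τ * y ^ 2 + a₁₁ τ * y + a₁₀ τ) := by
    funext y; rw [hf₁, hΦ₀]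
  have hfx0 : (fun x' => f₀ x' τ) = fun y => Real.exp (A τ * y ^ 2 + B τ * y + C τ) := by
    funext y; rw [hf₀, hΦ₀]
  have hft : (fun t => f₁ x t) = fun t => Real.exp (A t * x ^ 2 + B t * x + C t) *
      (a₁₃ t * x ^ 3 + a₁₂ t * x ^ 2 + a₁₁ t * x + a₁₀ t) := by
    funext t; rw [hf₁, hΦ₀]
  -- time derivative
  have hphi : HasDerivAt (fun t => A t * x ^ 2 + B t * x + C t)
      (deriv A τ * x ^ 2 + deriv B τ * x + deriv C τ) τ :=
    (((hA τ).hasDerivAt.mul_const _).add ((hB τ).hasDerivAt.mul_const _)).add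
      (hC τ).hasDerivAt
  have hpoly : HasDerivAt (fun t => a₁₃ t * x ^ 3 + a₁₂ t * x ^ 2 + a₁₁ t * x + a₁₀ t)
      (deriv a₁₃ τ * x ^ 3 + deriv a₁₂ τ * x ^ 2 + deriv a₁₁ τ * x + deriv a₁₀ τ) τ :=
    ((((hd₁₃ τ).hasDerivAt.mul_const _).add ((hd₁₂ τ).hasDerivAt.mul_const _)).add
      ((hd₁₁ τ).hasDerivAt.mul_const _)).add (hd₁₀ τ).hasDerivAt
  have Dτ : deriv (fun t => Real.exp (A t * x ^ 2 + B t * x + C t) *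
        (a₁₃ t * x ^ 3 + a₁₂ t * x ^ 2 + a₁₁ t * x + a₁₀ t)) τ
      = Real.exp (A τ * x ^ 2 + B τ * x + C τ) *
        ((deriv A τ * x ^ 2 + deriv B τ * x + deriv C τ) *
          (a₁₃ τ * x ^ 3 + a₁₂ τ * x ^ 2 + a₁₁ τ * x + a₁₀ τ)
        + (deriv a₁₃ τ * x ^ 3 + deriv a₁₂ τ * x ^ 2 + deriv a₁₁ τ * x + deriv a₁₀ τ)) := by
    have h := (hphi.exp).mul hpoly
    have h2 : HasDerivAt (fun t => Real.exp (A t * x ^ 2 + B t * x + C t) *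
        (a₁₃ t * x ^ 3 + a₁₂ t * x ^ 2 + a₁₁ t * x + a₁₀ t))
      (Real.exp (A τ * x ^ 2 + B τ * x + C τ) *
        ((deriv A τ * x ^ 2 + deriv B τ * x + deriv C τ) *
          (a₁₃ τ * x ^ 3 + a₁₂ τ * x ^ 2 + a₁₁ τ * x + a₁₀ τ)
        + (deriv a₁₃ τ * x ^ 3 + deriv a₁₂ τ * x ^ 2 + deriv a₁₁ τ * x + deriv a₁₀ τ))) τ := by
      refine h.congr_deriv ?_
      ring
    exact h2.deriv
  -- spatial derivatives of f₁
  have D1 : deriv (fun y => Real.exp (A τ * y ^ 2 + B τ * y + C τ) *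
        (a₁₃ τ * y ^ 3 + a₁₂ τ * y ^ 2 + a₁₁ τ * y + a₁₀ τ))
      = fun y => Real.exp (A τ * y ^ 2 + B τ * y + C τ) *
        ((2 * A τ * y + B τ) * (a₁₃ τ * y ^ 3 + a₁₂ τ * y ^ 2 + a₁₁ τ * y + a₁₀ τ)
          + (3 * a₁₃ τ * y ^ 2 + 2 * a₁₂ τ * y + a₁₁ τ)) := by
    funext y
    exact (hd_exp_mul (A τ) (B τ) (C τ)
      (fun z => poly3_hd (a₁₃ τ) (a₁₂ τ) (a₁₁ τ) (a₁₀ τ) z) y).deriv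
  have D2 : deriv (fun y => Real.exp (A τ * y ^ 2 + B τ * y + C τ) *
        ((2 * A τ * y + B τ) * (a₁₃ τ * y ^ 3 + a₁₂ τ * y ^ 2 + a₁₁ τ * y + a₁₀ τ)
          + (3 * a₁₃ τ * y ^ 2 + 2 * a₁₂ τ * y + a₁₁ τ))) x
      = Real.exp (A τ * x ^ 2 + B τ * x + C τ) *
        ((2 * A τ * x + B τ) *
          ((2 * A τ * x + B τ) * (a₁₃ τ * x ^ 3 + a₁₂ τ * x ^ 2 + a₁₁ τ * x + a₁₀ τ)
            + (3 * a₁₃ τ * x ^ 2 + 2 * a₁₂ τ * x + a₁₁ τ))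
        + (2 * A τ * (a₁₃ τ * x ^ 3 + a₁₂ τ * x ^ 2 + a₁₁ τ * x + a₁₀ τ)
            + (2 * A τ * x + B τ) * (3 * a₁₃ τ * x ^ 2 + 2 * a₁₂ τ * x + a₁₁ τ)
            + (6 * a₁₃ τ * x + 2 * a₁₂ τ))) :=
    (hd_exp_mul (A τ) (B τ) (C τ)
      (fun z => polyQ_hd (A τ) (B τ) (a₁₃ τ) (a₁₂ τ) (a₁₁ τ) (a₁₀ τ) z) x).deriv
  -- spatial derivatives of f₀
  have D01 : deriv (fun y => Real.exp (A τ * y ^ 2 + B τ * y + C τ))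
      = fun y => Real.exp (A τ * y ^ 2 + B τ * y + C τ) * (2 * A τ * y + B τ) := by
    funext y
    exact ((quadArg_hd (A τ) (B τ) (C τ) y).exp).deriv
  have D02 : deriv (fun y => Real.exp (A τ * y ^ 2 + B τ * y + C τ) * (2 * A τ * y + B τ))
      = fun y => Real.exp (A τ * y ^ 2 + B τ * y + C τ) *
        ((2 * A τ * y + B τ) * (2 * A τ * y + B τ) + 2 * A τ) := by
    funext y
    exact (hd_exp_mul (A τ) (B τ) (C τ) (fun z => lin_hd (A τ) (B τ) z) y).deriv
  have D03 : deriv (fun y => Real.exp (A τ * y ^ 2 + B τ * y + C τ) *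
        ((2 * A τ * y + B τ) * (2 * A τ * y + B τ) + 2 * A τ)) x
      = Real.exp (A τ * x ^ 2 + B τ * x + C τ) *
        ((2 * A τ * x + B τ) * ((2 * A τ * x + B τ) * (2 * A τ * x + B τ) + 2 * A τ)
          + (2 * A τ * (2 * A τ * x + B τ) + (2 * A τ * x + B τ) * (2 * A τ))) :=
    (hd_exp_mul (A τ) (B τ) (C τ) (fun z => polyR_hd (A τ) (B τ) z) x).deriv
  rw [hfx, hfx0, hft, Dτ, D1, D01, D02, D03, D2, hf₁, hΦ₀, dA, dB, dC, d3, d2, d1, d0]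
  ring
end
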